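/- arXiv:2202.03561 — 2 statements merged into one kernel-verified Lean document; each statement's English description precedes it below -/
import Mathlib

section
/- Let n ≥ 1, let A ∈ M_{2n}(ℝ) be an invertible skew-symmetric matrix defining ω(u,v) = uᵀAv, and let a group Γ act on ℝ^{2n} by smooth diffeomorphisms ρ_γ. Let σ₁, σ₂ : Γ → {±1} be group homomorphisms, and suppose the action is σ₁-semisymplectic: ω(d(ρ_γ)_x u, d(ρ_γ)_x v) = σ₁(γ)·ω(u,v) for all γ, x, u, v. Let H : ℝ^{2n} → ℝ be smooth with H(p) = 0 at some point p fixed by every ρ_γ, and let X_H(x) = (A⁻¹)ᵀ∇H(x) be its ω-Hamiltonian vector field. If X_H is Γ_{σ₂}-equivariant, i.e. X_H(ρ_γ(x)) = σ₂(γ)·d(ρ_γ)_x X_H(x) for all γ and x, then H is Γ_{σ₁σ₂}-invariant: H(ρ_γ(x)) = σ₁(γ)σ₂(γ)·H(x) for all γ and x. -/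
open Matrix

noncomputable def gradVec {m : ℕ} (H : (Fin m → ℝ) → ℝ) (x : Fin m → ℝ) : Fin m → ℝ :=
  fun i => fderiv ℝ H x (Pi.single i 1)

lemma fderiv_apply_eq_grad_dot {m : ℕ} (H : (Fin m → ℝ) → ℝ) (x : Fin m → ℝ)
    (v : Fin m → ℝ) : fderiv ℝ H x v = gradVec H x ⬝ᵥ v := by
  have hv : v = ∑ i, v i • (Pi.single i 1 : Fin m → ℝ) := by
    funext j
    simp [Finset.sum_apply, Pi.single_apply]
  conv_lhs => rw [hv]
  rw [map_sum]
  simp only [_root_.map_smul]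
  simp [gradVec, dotProduct, mul_comm]

lemma transpose_mulVec_dot {m : ℕ} (A : Matrix (Fin m) (Fin m) ℝ) (w u : Fin m → ℝ) :
    (Aᵀ *ᵥ w) ⬝ᵥ u = w ⬝ᵥ (A *ᵥ u) := by
  rw [Matrix.mulVec_transpose, ← Matrix.dotProduct_mulVec]

/-- If the action is σ₁-semisymplectic, H vanishes at a fixed point, and the
ω-Hamiltonian vector field X_H = (A⁻¹)ᵀ∇H is Γ_{σ₂}-equivariant, then H is
Γ_{σ₁σ₂}-invariant. -/
theorem hamiltonian_invariant_of_equivariant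
    {Γ : Type*} [Group Γ] (n : ℕ) (hn : 1 ≤ n)
    (A : Matrix (Fin (2 * n)) (Fin (2 * n)) ℝ) (hA : IsUnit A) (hskew : Aᵀ = -A)
    (ρ : Γ → (Fin (2 * n) → ℝ) → (Fin (2 * n) → ℝ))
    (hρsmooth : ∀ γ, ContDiff ℝ (⊤ : ℕ∞) (ρ γ))
    (hρone : ρ 1 = id)
    (hρmul : ∀ γ γ', ρ (γ * γ') = ρ γ ∘ ρ γ')
    (σ₁ σ₂ : Γ →* ℤˣ)
    (hsemi : ∀ (γ : Γ) (x u v : Fin (2 * n) → ℝ),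
      (fderiv ℝ (ρ γ) x u) ⬝ᵥ (A *ᵥ (fderiv ℝ (ρ γ) x v))
        = ((σ₁ γ : ℤ) : ℝ) * (u ⬝ᵥ (A *ᵥ v)))
    (H : (Fin (2 * n) → ℝ) → ℝ) (hH : ContDiff ℝ (⊤ : ℕ∞) H)
    (p : Fin (2 * n) → ℝ) (hp : H p = 0) (hpfix : ∀ γ, ρ γ p = p)
    (XH : (Fin (2 * n) → ℝ) → (Fin (2 * n) → ℝ))
    (hXH : ∀ x, XH x = (A⁻¹)ᵀ *ᵥ gradVec H x)
    (hequiv : ∀ (γ : Γ) (x : Fin (2 * n) → ℝ),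
      XH (ρ γ x) = ((σ₂ γ : ℤ) : ℝ) • fderiv ℝ (ρ γ) x (XH x)) :
    ∀ (γ : Γ) (x : Fin (2 * n) → ℝ),
      H (ρ γ x) = ((σ₁ γ : ℤ) : ℝ) * ((σ₂ γ : ℤ) : ℝ) * H x := by
  intro γ x
  set c : ℝ := ((σ₁ γ : ℤ) : ℝ) * ((σ₂ γ : ℤ) : ℝ) with hc
  have hHdiff : Differentiable ℝ H := hH.differentiable (by simp)
  have hρdiff : Differentiable ℝ (ρ γ) := (hρsmooth γ).differentiable (by simp)
  have hAdet : IsUnit A.det := (Matrix.isUnit_iff_isUnit_det A).mp hA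
  -- gradient in terms of X_H
  have hgrad : ∀ y, gradVec H y = Aᵀ *ᵥ XH y := by
    intro y
    rw [hXH, Matrix.mulVec_mulVec, ← Matrix.transpose_mul,
      Matrix.nonsing_inv_mul A hAdet, Matrix.transpose_one, Matrix.one_mulVec]
  -- key derivative identity
  have key : ∀ (y v : Fin (2 * n) → ℝ),
      fderiv ℝ H (ρ γ y) (fderiv ℝ (ρ γ) y v) = c * fderiv ℝ H y v := by
    intro y v
    rw [fderiv_apply_eq_grad_dot, fderiv_apply_eq_grad_dot, hgrad, hgrad,
      transpose_mulVec_dot, transpose_mulVec_dot, hequiv, smul_dotProduct,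
      hsemi]
    simp [hc]
    ring
  set f : (Fin (2 * n) → ℝ) → ℝ := fun y => H (ρ γ y) - c * H y with hf
  have hfd : Differentiable ℝ f := (hHdiff.comp hρdiff).sub (hHdiff.const_mul c)
  have hconst : ∀ y, fderiv ℝ f y = 0 := by
    intro y
    ext v
    have e1 : fderiv ℝ (H ∘ ρ γ) y = (fderiv ℝ H (ρ γ y)).comp (fderiv ℝ (ρ γ) y) :=
      fderiv_comp y (hHdiff _) (hρdiff _)
    have e2 : fderiv ℝ f y = fderiv ℝ (H ∘ ρ γ) y - c • fderiv ℝ H y := by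
      rw [hf]
      have : (fun y => H (ρ γ y) - c * H y) = (fun y => (H ∘ ρ γ) y - c * H y) := rfl
      rw [this]
      rw [fderiv_fun_sub ((hHdiff.comp hρdiff) y) ((hHdiff y).const_mul c)]
      congr 1
      exact fderiv_const_mul (hHdiff y) c
    rw [e2]
    simp only [ContinuousLinearMap.sub_apply, ContinuousLinearMap.smul_apply,
      ContinuousLinearMap.zero_apply, e1, ContinuousLinearMap.comp_apply]
    rw [key]
    simp [smul_eq_mul]
  have := is_const_of_fderiv_eq_zero hfd hconst x p
  have hfp : f p = 0 := by simp [hf, hpfix γ, hp]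
  rw [hfp] at this
  have : H (ρ γ x) - c * H x = 0 := this
  linarith
end

section
/- Let n ≥ 1, let A ∈ M_{2n}(ℝ) be an invertible skew-symmetric matrix defining ω(u,v) = uᵀAv, and let a group Γ act on ℝ^{2n} by smooth diffeomorphisms ρ_γ. Let σ₁, σ₂ : Γ → {±1} be group homomorphisms, and suppose the action is σ₁-semisymplectic: ω(d(ρ_γ)_x u, d(ρ_γ)_x v) = σ₁(γ)·ω(u,v) for all γ, x, u, v. Let H : ℝ^{2n} → ℝ be smooth and X_H(x) = (A⁻¹)ᵀ∇H(x) its ω-Hamiltonian vector field. If H is Γ_{σ₂}-invariant, i.e. H(ρ_γ(x)) = σ₂(γ)·H(x) for all γ, x, then X_H is Γ_{σ₁σ₂}-equivariant: X_H(ρ_γ(x)) = σ₁(γ)σ₂(γ)·d(ρ_γ)_x X_H(x) for all γ and x. -/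
open Matrix

lemma gradVec_dot {m : ℕ} (H : (Fin m → ℝ) → ℝ) (y u : Fin m → ℝ) :
    gradVec H y ⬝ᵥ u = fderiv ℝ H y u := by
  have hu : u = ∑ i, (u i) • (Pi.single i 1 : Fin m → ℝ) := by
    funext j
    simp [Finset.sum_apply, Pi.single_apply]
  calc gradVec H y ⬝ᵥ u = ∑ i, u i * fderiv ℝ H y (Pi.single i 1) := by
        simp [dotProduct, gradVec, mul_comm]
    _ = fderiv ℝ H y u := by
        conv_rhs => rw [hu, map_sum]
        simp

/-- If the action is σ₁-semisymplectic and H is Γ_{σ₂}-invariant, then the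
ω-Hamiltonian vector field X_H = (A⁻¹)ᵀ∇H is Γ_{σ₁σ₂}-equivariant. -/
theorem hamiltonian_equivariant_of_invariant
    {Γ : Type*} [Group Γ] (n : ℕ) (hn : 1 ≤ n)
    (A : Matrix (Fin (2 * n)) (Fin (2 * n)) ℝ) (hA : IsUnit A) (hskew : Aᵀ = -A)
    (ρ : Γ → (Fin (2 * n) → ℝ) → (Fin (2 * n) → ℝ))
    (hρsmooth : ∀ γ, ContDiff ℝ (⊤ : ℕ∞) (ρ γ))
    (hρone : ρ 1 = id)
    (hρmul : ∀ γ γ', ρ (γ * γ') = ρ γ ∘ ρ γ')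
    (σ₁ σ₂ : Γ →* ℤˣ)
    (hsemi : ∀ (γ : Γ) (x u v : Fin (2 * n) → ℝ),
      (fderiv ℝ (ρ γ) x u) ⬝ᵥ (A *ᵥ (fderiv ℝ (ρ γ) x v))
        = ((σ₁ γ : ℤ) : ℝ) * (u ⬝ᵥ (A *ᵥ v)))
    (H : (Fin (2 * n) → ℝ) → ℝ) (hH : ContDiff ℝ (⊤ : ℕ∞) H)
    (XH : (Fin (2 * n) → ℝ) → (Fin (2 * n) → ℝ))
    (hXH : ∀ x, XH x = (A⁻¹)ᵀ *ᵥ gradVec H x)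
    (hinv : ∀ (γ : Γ) (x : Fin (2 * n) → ℝ), H (ρ γ x) = ((σ₂ γ : ℤ) : ℝ) * H x) :
    ∀ (γ : Γ) (x : Fin (2 * n) → ℝ),
      XH (ρ γ x) = (((σ₁ γ : ℤ) : ℝ) * ((σ₂ γ : ℤ) : ℝ)) • fderiv ℝ (ρ γ) x (XH x) := by
  intro γ x
  set c1 : ℝ := ((σ₁ γ : ℤ) : ℝ) with hc1
  set c2 : ℝ := ((σ₂ γ : ℤ) : ℝ) with hc2
  have hc1sq : c1 * c1 = 1 := by
    rw [hc1, ← Int.cast_mul, ← Units.val_mul, Int.units_mul_self]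
    norm_num
  have hAdet : IsUnit A.det := (Matrix.isUnit_iff_isUnit_det A).mp hA
  have hHd : Differentiable ℝ H := hH.differentiable (by simp)
  have hργd : ∀ δ, Differentiable ℝ (ρ δ) := fun δ => (hρsmooth δ).differentiable (by simp)
  -- key: ω(X_H y, w) = dH_y w
  have hkey : ∀ (y w : Fin (2 * n) → ℝ), XH y ⬝ᵥ (A *ᵥ w) = fderiv ℝ H y w := by
    intro y w
    rw [hXH, dotProduct_mulVec, ← Matrix.mulVec_transpose, Matrix.mulVec_mulVec,
      ← Matrix.transpose_mul, Matrix.nonsing_inv_mul A hAdet, Matrix.transpose_one,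
      Matrix.one_mulVec, gradVec_dot]
  -- inverse of ρ γ
  have hinvcomp : ρ γ ∘ ρ γ⁻¹ = id := by rw [← hρmul, mul_inv_cancel, hρone]
  have hinvpt : ρ γ⁻¹ (ρ γ x) = x := by
    have : ρ γ⁻¹ ∘ ρ γ = id := by rw [← hρmul, inv_mul_cancel, hρone]
    exact congrFun this x
  set D := fderiv ℝ (ρ γ) x with hD
  -- surjectivity of D
  have hsurj : ∀ w, ∃ v, D v = w := by
    intro w
    refine ⟨fderiv ℝ (ρ γ⁻¹) (ρ γ x) w, ?_⟩
    have hcomp := fderiv_comp (𝕜 := ℝ) (ρ γ x)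
      ((hργd γ) (ρ γ⁻¹ (ρ γ x))) ((hργd γ⁻¹) (ρ γ x))
    rw [hinvcomp] at hcomp
    have := congrArg (fun (L : (Fin (2 * n) → ℝ) →L[ℝ] (Fin (2 * n) → ℝ)) => L w) hcomp
    simp only [fderiv_id, ContinuousLinearMap.coe_id', id_eq, ContinuousLinearMap.coe_comp',
      Function.comp_apply] at this
    rw [hinvpt] at this
    exact this.symm
  -- derivative of H ∘ ρ γ
  have hchain : ∀ v, fderiv ℝ H (ρ γ x) (D v) = c2 * fderiv ℝ H x v := by
    intro v
    have hcomp := fderiv_comp (𝕜 := ℝ) x (hHd (ρ γ x)) ((hργd γ) x)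
    have heq : H ∘ ρ γ = fun z => c2 * H z := by funext z; exact hinv γ z
    rw [heq] at hcomp
    have h2 : fderiv ℝ (fun z => c2 * H z) x = c2 • fderiv ℝ H x := by
      exact fderiv_const_mul (hHd x) c2
    have := congrArg (fun (L : (Fin (2 * n) → ℝ) →L[ℝ] ℝ) => L v) (hcomp.symm.trans h2)
    simpa using this
  -- the pairing equality
  have hpair : ∀ w, XH (ρ γ x) ⬝ᵥ (A *ᵥ w) = ((c1 * c2) • D (XH x)) ⬝ᵥ (A *ᵥ w) := by
    intro w
    obtain ⟨v, rfl⟩ := hsurj w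
    rw [hkey, hchain]
    have hs := hsemi γ x (XH x) v
    rw [← hD] at hs
    calc c2 * fderiv ℝ H x v = (c1 * c2) * (c1 * (XH x ⬝ᵥ (A *ᵥ v))) := by
          rw [hkey]; linear_combination (-(c2 * (fderiv ℝ H x) v)) * hc1sq
      _ = (c1 * c2) * (D (XH x) ⬝ᵥ (A *ᵥ D v)) := by rw [hs]
      _ = ((c1 * c2) • D (XH x)) ⬝ᵥ (A *ᵥ D v) := by rw [smul_dotProduct]; rfl
  -- conclude via invertibility of A
  have hAt : (Aᵀ)⁻¹ * Aᵀ = 1 := Matrix.nonsing_inv_mul Aᵀ (by rwa [Matrix.det_transpose])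
  have hmv : Aᵀ *ᵥ XH (ρ γ x) = Aᵀ *ᵥ ((c1 * c2) • D (XH x)) := by
    funext j
    have := hpair (Pi.single j 1)
    rwa [dotProduct_mulVec, ← Matrix.mulVec_transpose, dotProduct_single,
      dotProduct_mulVec, ← Matrix.mulVec_transpose, dotProduct_single, mul_one, mul_one] at this
  have := congrArg (fun u => (Aᵀ)⁻¹ *ᵥ u) hmv
  simpa [Matrix.mulVec_mulVec, hAt] using this
end
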